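/- arXiv:1004.0395 — 3 statements merged into one kernel-verified Lean document; each statement's English description precedes it below -/
import Mathlib

section
/- Fix an integer B ≥ 1. For every n ≥ 1 and every 0 ≤ v ≤ B−1, the probability that exactly v blocks are collectively held by n independent peers in the γ = ∞ model is given in closed form by p_n(v) = C(B,v) · ((B+1)/B)^n · ∑_{l=0}^{v} C(v,l) (−1)^l (B−v+l+1)^{−n}, and p_n(B) = 1 − ∑_{v=0}^{B−1} p_n(v). -/
/-- Single-peer block-ownership distribution in the `γ = ∞` model: a peer owning
`h ≤ B - 1` blocks has a uniformly random `h`-element subset, with `h` uniform on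
`{0, …, B-1}`; the full set has probability `0`. -/
noncomputable def wmu (B : ℕ) (s : Finset (Fin B)) : ℝ :=
  if s.card < B then 1 / (B * (B.choose s.card)) else 0

/-- `pmu B n v` : probability that exactly `v` blocks are collectively held by `n`
independent peers, each with block set drawn from `wmu B`. -/
noncomputable def pmu (B n v : ℕ) : ℝ :=
  ∑ f : Fin n → Finset (Fin B),
    if (Finset.univ.biUnion f).card = v then ∏ u, wmu B (f u) else 0

/-!
A single peer's set lies inside a fixed `t`-set `T` (`t < B`) with probability
`∑_h C(t,h) / (B C(B,h)) = (B+1) / (B (B+1-t))`, by a hockey-stick identity. By independence the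
union of `n` such sets lies inside `T` with probability the `n`-th power of this, and Möbius
inversion over the subsets of `T` turns these into the probability that the union is exactly `T`.
This depends only on `#T = v`; multiplying by the `C(B,v)` choices of `T` and reflecting the
alternating sum gives the closed form. The value at `v = B` is what the total mass `1` leaves.
-/

open Finset

lemma Nat.sum_range_choose_sub_sub {B t : ℕ} (ht : t ≤ B) :
    ∑ h ∈ range (t + 1), (B - h).choose (t - h) = (B + 1).choose t := by
  rw [← sum_range_reflect]
  calc ∑ i ∈ range (t + 1), (B - (t + 1 - 1 - i)).choose (t - (t + 1 - 1 - i))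
      = ∑ i ∈ range (t + 1), (i + (B - t)).choose (B - t) := by
        refine sum_congr rfl fun i hi => ?_
        have hi : i ≤ t := mem_range_succ_iff.mp hi
        rw [show B - (t + 1 - 1 - i) = (B - t) + i by omega,
          show t - (t + 1 - 1 - i) = i by omega, add_comm i, Nat.choose_symm_add]
    _ = (B + 1).choose t := by
        rw [Nat.sum_range_add_choose, show t + (B - t) + 1 = B + 1 by omega]
        exact Nat.choose_symm_of_eq_add (by omega)

lemma sum_range_choose_div_choose {K : Type*} [Field K] [CharZero K] {B t : ℕ} (ht : t ≤ B) :
    ∑ h ∈ range (t + 1), (t.choose h : K) / B.choose h = (B + 1) / (B + 1 - t) := by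
  have hBt : (B.choose t : K) ≠ 0 := by exact_mod_cast (Nat.choose_pos ht).ne'
  have hgap : (B + 1 - t : K) ≠ 0 := by
    rw [← Nat.cast_succ, ← Nat.cast_sub (by omega)]; exact_mod_cast (by omega : B + 1 - t ≠ 0)
  -- `C(t,h) C(B,t) = C(B,h) C(B-h,t-h)` turns each term into a hockey-stick summand over `C(B,t)`
  have hterm : ∀ h ∈ range (t + 1),
      (t.choose h : K) / B.choose h = ((B - h).choose (t - h) : K) / B.choose t := by
    intro h hh
    have hh : h ≤ t := mem_range_succ_iff.mp hh
    have hBh : (B.choose h : K) ≠ 0 := by exact_mod_cast (Nat.choose_pos (hh.trans ht)).ne'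
    rw [div_eq_div_iff hBh hBt]
    exact_mod_cast (mul_comm _ _).trans (Nat.choose_mul (n := B) hh) |>.trans (mul_comm _ _)
  rw [sum_congr rfl hterm, ← sum_div, ← Nat.cast_sum, Nat.sum_range_choose_sub_sub ht,
    div_eq_div_iff hBt hgap, ← Nat.cast_succ, ← Nat.cast_sub (by omega), mul_comm (B.succ : K)]
  exact_mod_cast (Nat.choose_mul_succ_eq B t).symm

section Powerset

variable {α : Type*} [DecidableEq α]

lemma Finset.sum_Icc_neg_one_pow_card {R : Type*} [Ring R] {S T : Finset α} (hST : S ⊆ T) :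
    ∑ U ∈ Icc S T, (-1 : R) ^ #U = if S = T then (-1) ^ #T else 0 := by
  have hinj : Set.InjOn (S ∪ ·) ((T \ S).powerset : Set (Finset α)) := by
    intro W hW W' hW' h
    have hW : Disjoint S W := disjoint_of_subset_right (mem_powerset.mp hW) disjoint_sdiff
    have hW' : Disjoint S W' := disjoint_of_subset_right (mem_powerset.mp hW') disjoint_sdiff
    simpa [union_sdiff_cancel_left hW, union_sdiff_cancel_left hW'] using
      congrArg (· \ S) h
  rw [Icc_eq_image_powerset hST, sum_image hinj]
  have hcard : ∀ W ∈ (T \ S).powerset, (-1 : R) ^ #(S ∪ W) = (-1) ^ #S * (-1) ^ #W := by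
    intro W hW
    rw [card_union_of_disjoint
      (disjoint_of_subset_right (mem_powerset.mp hW) disjoint_sdiff), pow_add]
  rw [sum_congr rfl hcard, ← mul_sum]
  have := congrArg (Int.cast : ℤ → R) (sum_powerset_neg_one_pow_card (x := T \ S))
  push_cast [sdiff_eq_empty_iff_subset] at this
  rw [this]
  by_cases h : S = T
  · simp [h]
  · rw [if_neg h, if_neg fun hTS => h (hST.antisymm hTS), mul_zero]

/-- Möbius inversion on the Boolean lattice of subsets of `T`. -/
lemma Finset.sum_powerset_neg_one_pow_mul_sum_powerset {R : Type*} [Ring R]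
    (g : Finset α → R) (T : Finset α) :
    ∑ U ∈ T.powerset, (-1 : R) ^ (#T + #U) * ∑ S ∈ U.powerset, g S = g T := by
  simp_rw [mul_sum]
  rw [sum_comm' (t' := T.powerset) (s' := fun S => Icc S T) (fun U S => by
    simp only [mem_powerset, mem_Icc]
    exact ⟨fun ⟨hU, hS⟩ => ⟨⟨hS, hU⟩, hS.trans hU⟩,
      fun ⟨⟨hS, hU⟩, _⟩ => ⟨hU, hS⟩⟩)]
  simp_rw [← sum_mul, pow_add, ← mul_sum]
  rw [sum_eq_single_of_mem T (mem_powerset_self T)]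
  · rw [sum_Icc_neg_one_pow_card le_rfl, if_pos rfl, ← pow_add, ← two_mul, pow_mul]
    simp
  · intro S hS hne
    rw [sum_Icc_neg_one_pow_card (mem_powerset.mp hS), if_neg hne]
    simp

end Powerset

section UnionOfIndependentDraws

variable {α ι R : Type*} [Fintype α] [DecidableEq α] [Fintype ι] [DecidableEq ι]

lemma sum_pi_ite_biUnion_subset [CommSemiring R] (w : Finset α → R) (T : Finset α) :
    ∑ f : ι → Finset α, (if univ.biUnion f ⊆ T then ∏ i, w (f i) else 0) =
      (∑ S ∈ T.powerset, w S) ^ Fintype.card ι := by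
  rw [← card_univ, ← prod_const, prod_univ_sum, ← sum_filter]
  congr 1
  ext f
  simp [Fintype.mem_piFinset]

lemma sum_pi_ite_biUnion_eq [CommRing R] (w : Finset α → R) (T : Finset α) :
    ∑ f : ι → Finset α, (if univ.biUnion f = T then ∏ i, w (f i) else 0) =
      ∑ U ∈ T.powerset, (-1) ^ (#T + #U) * (∑ S ∈ U.powerset, w S) ^ Fintype.card ι := by
  rw [← sum_powerset_neg_one_pow_mul_sum_powerset
    (fun S => ∑ f : ι → Finset α, if univ.biUnion f = S then ∏ i, w (f i) else 0) T]
  refine sum_congr rfl fun U _ => ?_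
  rw [← sum_pi_ite_biUnion_subset, sum_comm]
  simp_rw [sum_ite_eq, mem_powerset]

end UnionOfIndependentDraws

lemma sum_powerset_wmu {B : ℕ} {T : Finset (Fin B)} (hT : #T < B) :
    ∑ S ∈ T.powerset, wmu B S = (B + 1) / (B * (B + 1 - #T)) := by
  have hterm : ∀ S ∈ T.powerset, wmu B S = 1 / (B * B.choose #S) := fun S hS => by
    simp [wmu, (card_le_card (mem_powerset.mp hS)).trans_lt hT]
  rw [sum_congr rfl hterm, sum_powerset_apply_card (fun m => (1 : ℝ) / (B * B.choose m))]
  calc ∑ m ∈ range (#T + 1), (#T).choose m • ((1 : ℝ) / (B * B.choose m))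
      = 1 / B * ∑ m ∈ range (#T + 1), ((#T).choose m : ℝ) / B.choose m := by
        rw [mul_sum]
        exact sum_congr rfl fun m _ => by rw [nsmul_eq_mul]; ring
    _ = (B + 1) / (B * (B + 1 - #T)) := by
        rw [sum_range_choose_div_choose hT.le, div_mul_div_comm, one_mul]

lemma sum_wmu {B : ℕ} (hB : 0 < B) : ∑ S, wmu B S = 1 := by
  set w : ℕ → ℝ := fun m => if m < B then 1 / (B * B.choose m) else 0
  change ∑ S, w #S = 1
  rw [← powerset_univ, sum_powerset_apply_card w, card_univ, Fintype.card_fin, sum_range_succ]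
  have hterm : ∀ m ∈ range B, B.choose m • w m = 1 / B := fun m hm => by
    have hm := mem_range.mp hm
    have : (B.choose m : ℝ) ≠ 0 := by exact_mod_cast (Nat.choose_pos hm.le).ne'
    simp only [w, if_pos hm, nsmul_eq_mul]
    field_simp
  rw [show w B = 0 from if_neg (lt_irrefl B), smul_zero, add_zero, sum_congr rfl hterm,
    sum_const, card_range, nsmul_eq_mul]
  field_simp

lemma pmu_eq_sum_powersetCard (B n v : ℕ) :
    pmu B n v = ∑ T ∈ powersetCard v univ,
      ∑ f : Fin n → Finset (Fin B), if univ.biUnion f = T then ∏ u, wmu B (f u) else 0 := by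
  rw [pmu, sum_comm]
  refine sum_congr rfl fun f _ => ?_
  simp only [sum_ite_eq, mem_powersetCard_univ]

lemma pmu_eq_choose_mul_sum {B v : ℕ} (n : ℕ) (hv : v < B) :
    pmu B n v = B.choose v * ∑ m ∈ range (v + 1),
      (v.choose m : ℝ) * ((-1) ^ (v + m) * ((B + 1) / (B * (B + 1 - m))) ^ n) := by
  have hT : ∀ T ∈ powersetCard v (univ : Finset (Fin B)),
      ∑ f : Fin n → Finset (Fin B), (if univ.biUnion f = T then ∏ u, wmu B (f u) else 0) =
        ∑ m ∈ range (v + 1),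
          (v.choose m : ℝ) * ((-1) ^ (v + m) * ((B + 1) / (B * (B + 1 - m))) ^ n) := by
    intro T hT
    have hTv : #T = v := mem_powersetCard_univ.mp hT
    have hU : ∀ U ∈ T.powerset, (-1 : ℝ) ^ (#T + #U) * (∑ S ∈ U.powerset, wmu B S) ^ n =
        (-1) ^ (v + #U) * ((B + 1) / (B * (B + 1 - #U))) ^ n := fun U hU => by
      rw [sum_powerset_wmu ((card_le_card (mem_powerset.mp hU)).trans_lt (hTv ▸ hv)), hTv]
    rw [sum_pi_ite_biUnion_eq, Fintype.card_fin, sum_congr rfl hU,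
      sum_powerset_apply_card (fun m => (-1 : ℝ) ^ (v + m) * ((B + 1) / (B * (B + 1 - m))) ^ n),
      hTv]
    simp_rw [nsmul_eq_mul]
  rw [pmu_eq_sum_powersetCard, sum_congr rfl hT, sum_const, card_powersetCard, card_univ,
    Fintype.card_fin, nsmul_eq_mul]

lemma sum_range_choose_mul_neg_one_pow_reflect {K : Type*} [Field K] (B v n : ℕ) :
    ∑ m ∈ range (v + 1),
        (v.choose m : K) * ((-1) ^ (v + m) * ((B + 1) / (B * (B + 1 - m))) ^ n) =
      ((B + 1) / B) ^ n *
        ∑ l ∈ range (v + 1), v.choose l * (-1 : K) ^ l / (B - v + l + 1) ^ n := by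
  rw [← sum_range_reflect, mul_sum]
  refine sum_congr rfl fun l hl => ?_
  have hl : l ≤ v := mem_range_succ_iff.mp hl
  rw [Nat.add_sub_cancel, Nat.choose_symm hl, Nat.cast_sub hl,
    show v + (v - l) = 2 * (v - l) + l by omega, pow_add, pow_mul, ← div_div, div_pow]
  ring

lemma sum_range_pmu {B : ℕ} (hB : 0 < B) (n : ℕ) : ∑ v ∈ range (B + 1), pmu B n v = 1 := by
  simp only [pmu]
  rw [sum_comm]
  have hcard : ∀ f : Fin n → Finset (Fin B), #(univ.biUnion f) ∈ range (B + 1) := fun f =>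
    mem_range.mpr (Nat.lt_succ_of_le ((card_le_univ _).trans_eq (Fintype.card_fin B)))
  simp_rw [sum_ite_eq, hcard, if_true, ← Fintype.prod_sum (fun _ S => wmu B S), sum_wmu hB,
    prod_const_one]

theorem stmt7_general (B n : ℕ) (hB : 1 ≤ B) :
    (∀ v : ℕ, v ≤ B - 1 →
      pmu B n v = (B.choose v : ℝ) * (((B : ℝ) + 1) / (B : ℝ)) ^ n *
        ∑ l ∈ Finset.range (v + 1),
          (v.choose l : ℝ) * (-1 : ℝ) ^ l / ((B : ℝ) - v + l + 1) ^ n) ∧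
    pmu B n B = 1 - ∑ v ∈ Finset.range B, pmu B n v := by
  refine ⟨fun v hv => ?_, ?_⟩
  · rw [pmu_eq_choose_mul_sum n (by omega), sum_range_choose_mul_neg_one_pow_reflect, mul_assoc]
  · rw [← sum_range_pmu hB n, sum_range_succ]
    ring

/-- for `B ≥ 1`, `n ≥ 1` and `0 ≤ v ≤ B-1`, in the `γ = ∞` model,
`p_n(v) = C(B,v) ((B+1)/B)^n ∑_{l=0}^{v} C(v,l) (-1)^l (B-v+l+1)^{-n}`, and
`p_n(B) = 1 - ∑_{v=0}^{B-1} p_n(v)`. -/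
theorem stmt7 (B n : ℕ) (hB : 1 ≤ B) (hn : 1 ≤ n) :
    (∀ v : ℕ, v ≤ B - 1 →
      pmu B n v = (B.choose v : ℝ) * (((B : ℝ) + 1) / (B : ℝ)) ^ n *
        ∑ l ∈ Finset.range (v + 1),
          (v.choose l : ℝ) * (-1 : ℝ) ^ l / ((B : ℝ) - v + l + 1) ^ n) ∧
    pmu B n B = 1 - ∑ v ∈ Finset.range B, pmu B n v :=
  stmt7_general B n hB
end

section
/- Fix an integer B ≥ 1 and a real ρ ≥ 0. The steady-state swarm self-sustainability in the γ = μ model, defined as p(B;μ) = ∑_{n=0}^{∞} e^{−(B+1)ρ} ((B+1)ρ)^n / n! · P(|S_1 ∪ ⋯ ∪ S_n| = B), equals ∑_{l=0}^{B} C(B,l) (−1)^l e^{−(B+1)ρ·l/(l+1)}. -/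
/-- Single-peer block-ownership distribution in the `γ = μ` model: each subset `s`
of `{1, …, B}` has probability `1/((B+1) C(B,|s|))` (a uniform size in `{0, …, B}`,
then a uniform subset of that size). -/
noncomputable def wnu (B : ℕ) (s : Finset (Fin B)) : ℝ :=
  1 / ((B + 1) * (B.choose s.card))

/-- `pnu B n v` : probability that exactly `v` blocks are collectively held by `n`
independent peers, each with block set drawn from `wnu B`. -/
noncomputable def pnu (B n v : ℕ) : ℝ :=
  ∑ f : Fin n → Finset (Fin B),
    if (Finset.univ.biUnion f).card = v then ∏ u, wnu B (f u) else 0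

/-!
By inclusion–exclusion over the set `A ⊇ S₁ ∪ ⋯ ∪ Sₙ` of blocks the peers may hold,
`P(S₁ ∪ ⋯ ∪ Sₙ = everything) = ∑_A (-1)^{|Aᶜ|} ν_B(2^A)ⁿ`, and `ν_B` gives the subsets of a set
missing `l` blocks total mass exactly `1/(l+1)`. Averaging `(1/(l+1))ⁿ` over a Poisson number `n`
of peers with mean `c` gives the Poisson generating function `e^{c(1/(l+1) - 1)} = e^{-cl/(l+1)}`.
-/

open Finset

lemma Nat.sum_range_add_sub_choose (a k : ℕ) :
    ∑ h ∈ range (a + 1), (a + k - h).choose k = (a + k + 1).choose (k + 1) := by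
  rw [← Nat.sum_range_add_choose, ← sum_range_reflect]
  refine sum_congr rfl fun h hh => ?_
  rw [mem_range] at hh
  congr 1
  omega

lemma Nat.add_choose_mul_choose (a k h : ℕ) (hh : h ≤ a) :
    (a + k).choose k * a.choose h = (a + k).choose h * (a + k - h).choose k := by
  rw [← Nat.choose_symm_add, Nat.choose_mul hh,
    Nat.choose_symm_of_eq_add (show a + k - h = a - h + k by omega)]

lemma sum_range_choose_div_add_choose (a k : ℕ) :
    ∑ h ∈ range (a + 1), (a.choose h : ℝ) / (a + k).choose h = (a + k + 1) / (k + 1) := by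
  have hpos : ∀ {n m : ℕ}, m ≤ n → (0 : ℝ) < n.choose m := fun hm => by
    exact_mod_cast Nat.choose_pos hm
  calc ∑ h ∈ range (a + 1), (a.choose h : ℝ) / (a + k).choose h
      = ∑ h ∈ range (a + 1), ((a + k - h).choose k : ℝ) / (a + k).choose k := by
        refine sum_congr rfl fun h hmem => ?_
        have hh : h ≤ a := Nat.lt_succ_iff.mp (mem_range.mp hmem)
        rw [div_eq_div_iff (hpos (by omega)).ne' (hpos (by omega)).ne']
        have e : ((a + k).choose k : ℝ) * a.choose h =
            (a + k).choose h * (a + k - h).choose k := by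
          exact_mod_cast Nat.add_choose_mul_choose a k h hh
        linear_combination e
    _ = ((a + k + 1).choose (k + 1) : ℝ) / (a + k).choose k := by
        rw [← sum_div, ← Nat.sum_range_add_sub_choose]
        push_cast
        rfl
    _ = (a + k + 1) / (k + 1) := by
        rw [div_eq_div_iff (hpos (by omega)).ne' (by positivity)]
        exact_mod_cast (Nat.add_one_mul_choose_eq (a + k) k).symm

lemma sum_powerset_wnu {B : ℕ} (A : Finset (Fin B)) :
    ∑ s ∈ A.powerset, wnu B s = 1 / (#Aᶜ + 1) := by
  have hB : B = #A + #Aᶜ := by simp [card_add_card_compl]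
  have hsum := sum_range_choose_div_add_choose #A #Aᶜ
  rw [← hB] at hsum
  simp only [wnu]
  rw [sum_powerset_apply_card (f := fun m => (1 : ℝ) / ((B + 1) * B.choose m))]
  calc ∑ h ∈ range (#A + 1), (#A).choose h • (1 / (((B : ℝ) + 1) * B.choose h))
      = (∑ h ∈ range (#A + 1), ((#A).choose h : ℝ) / B.choose h) / (B + 1) := by
        rw [sum_div]
        refine sum_congr rfl fun h _ => ?_
        rw [nsmul_eq_mul]
        field_simp
    _ = 1 / (#Aᶜ + 1) := by
        have hB' : (B : ℝ) = #A + #Aᶜ := by exact_mod_cast hB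
        rw [hsum, hB']
        field_simp

lemma ite_eq_univ_eq_sum_neg_one_pow {α R : Type*} [Fintype α] [DecidableEq α] [Ring R]
    (U : Finset α) :
    (if U = univ then (1 : R) else 0) = ∑ A, if U ⊆ A then (-1) ^ #Aᶜ else 0 := by
  calc (if U = univ then (1 : R) else 0)
      = ∑ C ∈ Uᶜ.powerset, (-1 : R) ^ #C := by
        have h := congrArg (Int.cast : ℤ → R) (sum_powerset_neg_one_pow_card (x := Uᶜ))
        push_cast at h
        simp only [h, compl_eq_empty_iff]
    _ = ∑ C, if U ⊆ Cᶜ then (-1 : R) ^ #C else 0 := by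
        rw [← sum_filter]
        congr 1
        ext C
        simp [subset_compl_comm]
    _ = ∑ A, if U ⊆ A then (-1) ^ #Aᶜ else 0 :=
        Fintype.sum_bijective compl compl_involutive.bijective _ _ fun C => by simp

lemma sum_ite_biUnion_subset_prod {α R : Type*} [Fintype α] [DecidableEq α] [CommSemiring R]
    (w : Finset α → R) (A : Finset α) (n : ℕ) :
    ∑ f : Fin n → Finset α, (if univ.biUnion f ⊆ A then ∏ u, w (f u) else 0) =
      (∑ s ∈ A.powerset, w s) ^ n := by
  have hfilter : ({f | univ.biUnion f ⊆ A} : Finset (Fin n → Finset α)) =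
      Fintype.piFinset fun _ => A.powerset := by
    ext f
    simp [Fintype.mem_piFinset]
  rw [← sum_filter, hfilter, ← prod_univ_sum, prod_const, card_univ, Fintype.card_fin]

lemma pnu_self_eq (B n : ℕ) :
    pnu B n B = ∑ l ∈ range (B + 1), (B.choose l : ℝ) * (-1) ^ l * (1 / (l + 1)) ^ n := by
  have hunion : ∀ f : Fin n → Finset (Fin B),
      #(univ.biUnion f) = B ↔ univ.biUnion f = univ := fun f => by
    rw [← card_eq_iff_eq_univ, Fintype.card_fin]
  calc pnu B n B
      = ∑ f : Fin n → Finset (Fin B),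
          (if univ.biUnion f = univ then (1 : ℝ) else 0) * ∏ u, wnu B (f u) := by
        simp only [pnu, hunion, ite_mul, one_mul, zero_mul]
    _ = ∑ A : Finset (Fin B), (-1 : ℝ) ^ #Aᶜ *
          ∑ f : Fin n → Finset (Fin B), if univ.biUnion f ⊆ A then ∏ u, wnu B (f u) else 0 := by
        simp_rw [ite_eq_univ_eq_sum_neg_one_pow, sum_mul, mul_sum]
        rw [sum_comm]
        simp only [ite_mul, mul_ite, zero_mul, mul_zero]
    _ = ∑ A : Finset (Fin B), (-1 : ℝ) ^ #Aᶜ * (1 / (#Aᶜ + 1)) ^ n := by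
        simp_rw [sum_ite_biUnion_subset_prod, sum_powerset_wnu]
    _ = ∑ C : Finset (Fin B), (-1 : ℝ) ^ #C * (1 / (#C + 1)) ^ n :=
        Fintype.sum_bijective compl compl_involutive.bijective _ _ fun _ => rfl
    _ = ∑ l ∈ range (B + 1), (B.choose l : ℝ) * (-1) ^ l * (1 / (l + 1)) ^ n := by
        rw [← powerset_univ,
          sum_powerset_apply_card (f := fun l => (-1 : ℝ) ^ l * (1 / ((l : ℝ) + 1)) ^ n),
          card_univ, Fintype.card_fin]
        simp only [nsmul_eq_mul, mul_assoc]

lemma hasSum_exp_neg_mul_pow_div_factorial_mul_pow (c x : ℝ) :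
    HasSum (fun n : ℕ => Real.exp (-c) * c ^ n / n.factorial * x ^ n)
      (Real.exp (c * (x - 1))) := by
  convert! (NormedSpace.expSeries_div_hasSum_exp (c * x)).mul_left (Real.exp (-c)) using 1
  · funext n
    rw [mul_pow]
    ring
  · rw [← Real.exp_eq_exp_ℝ, ← Real.exp_add]
    ring_nf

theorem stmt10_general (B : ℕ) (ρ : ℝ) :
    (∑' n : ℕ, Real.exp (-(((B : ℝ) + 1) * ρ)) * (((B : ℝ) + 1) * ρ) ^ n / n.factorial *
        pnu B n B)
      = ∑ l ∈ Finset.range (B + 1),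
          (B.choose l : ℝ) * (-1 : ℝ) ^ l *
            Real.exp (-(((B : ℝ) + 1) * ρ) * l / ((l : ℝ) + 1)) := by
  set c := ((B : ℝ) + 1) * ρ
  have hsum := hasSum_sum fun l (_ : l ∈ range (B + 1)) =>
    (hasSum_exp_neg_mul_pow_div_factorial_mul_pow c (1 / (l + 1))).mul_left
      ((B.choose l : ℝ) * (-1) ^ l)
  calc ∑' n : ℕ, Real.exp (-c) * c ^ n / n.factorial * pnu B n B
      = ∑' n : ℕ, ∑ l ∈ range (B + 1), (B.choose l : ℝ) * (-1) ^ l *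
          (Real.exp (-c) * c ^ n / n.factorial * (1 / (l + 1)) ^ n) :=
        tsum_congr fun n => by
          rw [pnu_self_eq, mul_sum]
          exact sum_congr rfl fun l _ => by ring
    _ = ∑ l ∈ range (B + 1), (B.choose l : ℝ) * (-1) ^ l * Real.exp (c * (1 / (l + 1) - 1)) :=
        hsum.tsum_eq
    _ = ∑ l ∈ range (B + 1), (B.choose l : ℝ) * (-1) ^ l * Real.exp (-c * l / (l + 1)) :=
        sum_congr rfl fun l _ => by
          congr 2
          field_simp
          ring

/-- for `B ≥ 1` and `ρ ≥ 0`, the steady-state swarm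
self-sustainability in the `γ = μ` model,
`p(B;μ) = ∑_{n=0}^{∞} e^{-(B+1)ρ} ((B+1)ρ)^n / n! · P(|S₁ ∪ ⋯ ∪ Sₙ| = B)`,
equals `∑_{l=0}^{B} C(B,l) (-1)^l e^{-(B+1)ρ l/(l+1)}`. -/
theorem stmt10 (B : ℕ) (hB : 1 ≤ B) (ρ : ℝ) (hρ : 0 ≤ ρ) :
    (∑' n : ℕ, Real.exp (-(((B : ℝ) + 1) * ρ)) * (((B : ℝ) + 1) * ρ) ^ n / n.factorial *
        pnu B n B)
      = ∑ l ∈ Finset.range (B + 1),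
          (B.choose l : ℝ) * (-1 : ℝ) ^ l *
            Real.exp (-(((B : ℝ) + 1) * ρ) * l / ((l : ℝ) + 1)) :=
  stmt10_general B ρ
end

section
/- Fix an integer B ≥ 1 and a subset L of {1,…,B} with |L| = l ≥ 1. For every n ≥ 0, if S_1,…,S_n are independent draws from ν_B, then P(L ∩ (S_1 ∪ ⋯ ∪ S_n) = ∅) = (l+1)^{−n}. In particular, for a single draw S from ν_B, P(L ∩ S = ∅) = 1/(l+1). -/
open Finset

namespace Nat

-- Both sides equal `C(B, k+l) C(k+l, k)`.
theorem choose_sub_mul_choose_comm (B l k : ℕ) :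
    (B - l).choose k * B.choose l = (B - k).choose l * B.choose k := by
  have hl := choose_mul (n := B) (Nat.le_add_right l k)
  have hk := choose_mul (n := B) (Nat.le_add_left k l)
  rw [Nat.add_sub_cancel_left, choose_symm_add] at hl
  rw [Nat.add_sub_cancel] at hk
  rw [mul_comm, ← hl, hk, mul_comm]

theorem sum_range_choose_sub {B l : ℕ} (hl : l ≤ B) :
    ∑ k ∈ range (B - l + 1), (B - k).choose l = (B + 1).choose (l + 1) := by
  rw [← sum_range_reflect]
  have reflect : ∀ i ∈ range (B - l + 1), (B - (B - l + 1 - 1 - i)).choose l = (i + l).choose l :=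
    fun i hi => by rw [mem_range] at hi; congr 1; omega
  rw [sum_congr rfl reflect, sum_range_add_choose, Nat.sub_add_cancel hl]

end Nat

theorem sum_range_choose_div_choose_s11 {B l : ℕ} (hl : l ≤ B) :
    ∑ k ∈ range (B - l + 1), ((B - l).choose k : ℝ) / B.choose k = (B + 1) / (l + 1) := by
  have hCl : (B.choose l : ℝ) ≠ 0 := by exact_mod_cast (Nat.choose_pos hl).ne'
  have term : ∀ k ∈ range (B - l + 1),
      ((B - l).choose k : ℝ) / B.choose k = ((B - k).choose l : ℝ) / B.choose l := by
    intro k hk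
    have hCk : (B.choose k : ℝ) ≠ 0 := by
      rw [mem_range] at hk; exact_mod_cast (Nat.choose_pos (by omega)).ne'
    rw [div_eq_div_iff hCk hCl]
    exact_mod_cast Nat.choose_sub_mul_choose_comm B l k
  rw [sum_congr rfl term, ← sum_div, div_eq_div_iff hCl (by positivity), ← Nat.cast_sum,
    Nat.sum_range_choose_sub hl]
  exact_mod_cast (Nat.add_one_mul_choose_eq B l).symm

theorem sum_ite_inter_eq_empty_wnu {B : ℕ} (L : Finset (Fin B)) :
    (∑ s : Finset (Fin B), if L ∩ s = ∅ then wnu B s else 0) = 1 / ((L.card : ℝ) + 1) := by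
  have hL : L.card ≤ B := by simpa using card_le_univ L
  have misses : univ.filter (fun s => L ∩ s = ∅) = Lᶜ.powerset := by
    ext s
    simp [subset_compl_iff_disjoint_left, disjoint_iff_inter_eq_empty]
  rw [← sum_filter, misses]
  unfold wnu
  rw [sum_powerset_apply_card (fun k => 1 / ((B + 1) * (B.choose k : ℝ))),
    card_compl, Fintype.card_fin]
  have term : ∀ k ∈ range (B - L.card + 1),
      (B - L.card).choose k • (1 / ((B + 1) * (B.choose k : ℝ))) =
        ((B : ℝ) + 1)⁻¹ * ((B - L.card).choose k / B.choose k) := by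
    intro k _
    rw [nsmul_eq_mul, one_div, mul_inv]
    ring
  rw [sum_congr rfl term, ← mul_sum, sum_range_choose_div_choose_s11 hL]
  field_simp

theorem sum_pi_ite_inter_biUnion_eq_empty {α ι R : Type*} [Fintype α] [DecidableEq α]
    [Fintype ι] [DecidableEq ι] [CommSemiring R] (L : Finset α) (w : Finset α → R) :
    (∑ f : ι → Finset α, if L ∩ univ.biUnion f = ∅ then ∏ u, w (f u) else 0) =
      (∑ s, if L ∩ s = ∅ then w s else 0) ^ Fintype.card ι := by
  rw [← card_univ, ← prod_const, Fintype.prod_sum]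
  refine sum_congr rfl fun f _ => ?_
  simp only [Fintype.prod_ite_zero, ← disjoint_iff_inter_eq_empty, disjoint_biUnion_right,
    mem_univ, true_implies]

theorem stmt11_general (B : ℕ) (L : Finset (Fin B)) (l : ℕ)
    (hL : L.card = l) :
    (∀ n : ℕ,
      (∑ f : Fin n → Finset (Fin B),
        if L ∩ Finset.univ.biUnion f = ∅ then ∏ u, wnu B (f u) else 0)
        = 1 / ((l : ℝ) + 1) ^ n) ∧
    (∑ s : Finset (Fin B), if L ∩ s = ∅ then wnu B s else 0) = 1 / ((l : ℝ) + 1) := by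
  have single := sum_ite_inter_eq_empty_wnu L
  rw [hL] at single
  refine ⟨fun n => ?_, single⟩
  rw [sum_pi_ite_inter_biUnion_eq_empty, single, Fintype.card_fin, one_div_pow]

/-- for `B ≥ 1` and a subset `L` of the blocks with `|L| = l ≥ 1`:
for every `n ≥ 0`, if `S₁, …, Sₙ` are independent draws from `ν_B` then
`P(L ∩ (S₁ ∪ ⋯ ∪ Sₙ) = ∅) = (l+1)^{-n}`; in particular, for a single draw `S`,
`P(L ∩ S = ∅) = 1/(l+1)`. -/
theorem stmt11 (B : ℕ) (hB : 1 ≤ B) (L : Finset (Fin B)) (l : ℕ)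
    (hL : L.card = l) (hl : 1 ≤ l) :
    (∀ n : ℕ,
      (∑ f : Fin n → Finset (Fin B),
        if L ∩ Finset.univ.biUnion f = ∅ then ∏ u, wnu B (f u) else 0)
        = 1 / ((l : ℝ) + 1) ^ n) ∧
    (∑ s : Finset (Fin B), if L ∩ s = ∅ then wnu B s else 0) = 1 / ((l : ℝ) + 1) :=
  stmt11_general B L l hL
end
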